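/- Let X be a normed quasi-algebra with Hausdorff metric h. Then for all x, y, z ∈ X, h(x*y, x*z) ≤ ‖x‖ · h(y, z). -/

import Mathlib

/-- A quasi-algebra in the sense of Aseev/Dehghanizade–Modarres: a partially
ordered set with addition, zero, real scalar multiplication and a product. -/
structure QuasiAlgebra (X : Type*) [PartialOrder X] where
  add : X → X → X
  zero : X
  smul : ℝ → X → X
  mul : X → X → X
  add_comm : ∀ x y, add x y = add y x
  add_assoc : ∀ x y z, add x (add y z) = add (add x y) z
  add_zero : ∀ x, add x zero = x
  smul_smul : ∀ (α β : ℝ) (x : X), smul α (smul β x) = smul (α * β) x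
  smul_add : ∀ (α : ℝ) (x y : X), smul α (add x y) = add (smul α x) (smul α y)
  one_smul : ∀ x, smul 1 x = x
  zero_smul : ∀ x, smul 0 x = zero
  add_smul_le : ∀ (α β : ℝ) (x : X), smul (α + β) x ≤ add (smul α x) (smul β x)
  add_le_add : ∀ {x y z v : X}, x ≤ y → z ≤ v → add x z ≤ add y v
  smul_le_smul : ∀ (α : ℝ) {x y : X}, x ≤ y → smul α x ≤ smul α y
  mul_assoc : ∀ x y z, mul x (mul y z) = mul (mul x y) z
  smul_mul : ∀ (α : ℝ) (x y : X), smul α (mul x y) = mul (smul α x) y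
  mul_smul : ∀ (α : ℝ) (x y : X), smul α (mul x y) = mul x (smul α y)
  zero_mul_zero : mul zero zero = zero
  mul_add_le : ∀ x y z, mul x (add y z) ≤ add (mul x y) (mul x z)
  add_mul_le : ∀ x y z, mul (add x y) z ≤ add (mul x z) (mul y z)
  mul_le_mul : ∀ {x y z v : X}, x ≤ y → z ≤ v → mul x z ≤ mul y v

namespace QuasiAlgebra

variable {X : Type*} [PartialOrder X]

/-- `-x = (-1)·x`. -/
def neg (Q : QuasiAlgebra X) (x : X) : X := Q.smul (-1) x

/-- `x - y = x + (-y)`. -/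
def sub (Q : QuasiAlgebra X) (x y : X) : X := Q.add x (Q.neg y)

/-- An element is regular if it has an additive inverse. -/
def Regular (Q : QuasiAlgebra X) (x : X) : Prop := ∃ x' : X, Q.add x x' = Q.zero

/-- A norm on a quasi-algebra. -/
structure Norm (Q : QuasiAlgebra X) where
  norm : X → ℝ
  norm_pos : ∀ {x : X}, x ≠ Q.zero → 0 < norm x
  norm_add : ∀ x y, norm (Q.add x y) ≤ norm x + norm y
  norm_smul : ∀ (α : ℝ) (x : X), norm (Q.smul α x) = |α| * norm x
  norm_mul : ∀ x y, norm (Q.mul x y) ≤ norm x * norm y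
  norm_mono : ∀ {x y : X}, x ≤ y → norm x ≤ norm y
  le_of_forall_eps : ∀ {x y : X},
    (∀ ε : ℝ, 0 < ε → ∃ z : X, x ≤ Q.add y z ∧ norm z ≤ ε) → x ≤ y

/-- The Hausdorff metric of a normed quasi-algebra. -/
noncomputable def hmet (Q : QuasiAlgebra X) (N : Q.Norm) (x y : X) : ℝ :=
  sInf {r : ℝ | 0 ≤ r ∧ ∃ a₁ a₂ : X,
    x ≤ Q.add y a₁ ∧ y ≤ Q.add x a₂ ∧ N.norm a₁ ≤ r ∧ N.norm a₂ ≤ r}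

end QuasiAlgebra

open scoped Pointwise in
theorem Real.sInf_le_mul_sInf_of_smul_subset {a : ℝ} {s t : Set ℝ} (ha : 0 ≤ a)
    (hs : s.Nonempty) (ht : BddBelow t) (hst : a • s ⊆ t) : sInf t ≤ a * sInf s :=
  (csInf_le_csInf ht hs.smul_set hst).trans_eq (Real.sInf_smul_of_nonneg ha s)

namespace QuasiAlgebra

open scoped Pointwise

variable {X : Type*} [PartialOrder X] {Q : QuasiAlgebra X}

namespace Norm

variable (N : Q.Norm)

theorem norm_zero : N.norm Q.zero = 0 := by
  simpa [Q.zero_smul] using N.norm_smul 0 Q.zero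

theorem norm_nonneg (x : X) : 0 ≤ N.norm x := by
  by_cases hx : x = Q.zero
  · rw [hx, N.norm_zero]
  · exact (N.norm_pos hx).le

end Norm

variable (Q)

theorem zero_le_add_neg (x : X) : Q.zero ≤ Q.add x (Q.neg x) := by
  simpa [neg, Q.zero_smul, Q.one_smul] using Q.add_smul_le 1 (-1) x

theorem le_add_sub (x y : X) : x ≤ Q.add y (Q.sub x y) :=
  calc x = Q.add x Q.zero := (Q.add_zero x).symm
    _ ≤ Q.add x (Q.add y (Q.neg y)) := Q.add_le_add le_rfl (Q.zero_le_add_neg y)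
    _ = Q.add y (Q.sub x y) := by rw [sub, Q.add_assoc, Q.add_assoc, Q.add_comm x y]

def hausdorffRadii (N : Q.Norm) (x y : X) : Set ℝ :=
  {r : ℝ | 0 ≤ r ∧ ∃ a₁ a₂ : X,
    x ≤ Q.add y a₁ ∧ y ≤ Q.add x a₂ ∧ N.norm a₁ ≤ r ∧ N.norm a₂ ≤ r}

variable (N : Q.Norm)

theorem hmet_eq_sInf (x y : X) : Q.hmet N x y = sInf (Q.hausdorffRadii N x y) := rfl

theorem hausdorffRadii_bddBelow (x y : X) : BddBelow (Q.hausdorffRadii N x y) :=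
  ⟨0, fun _ hr => hr.1⟩

theorem hausdorffRadii_nonempty (x y : X) : (Q.hausdorffRadii N x y).Nonempty :=
  ⟨max (N.norm (Q.sub x y)) (N.norm (Q.sub y x)),
    (N.norm_nonneg _).trans (le_max_left _ _), Q.sub x y, Q.sub y x,
    Q.le_add_sub x y, Q.le_add_sub y x, le_max_left _ _, le_max_right _ _⟩

theorem smul_hausdorffRadii_subset_mul_left (x y z : X) :
    N.norm x • Q.hausdorffRadii N y z ⊆ Q.hausdorffRadii N (Q.mul x y) (Q.mul x z) := by
  rintro _ ⟨r, ⟨hr, a₁, a₂, hy, hz, ha₁, ha₂⟩, rfl⟩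
  have hx := N.norm_nonneg x
  exact ⟨mul_nonneg hx hr, Q.mul x a₁, Q.mul x a₂,
    (Q.mul_le_mul le_rfl hy).trans (Q.mul_add_le x z a₁),
    (Q.mul_le_mul le_rfl hz).trans (Q.mul_add_le x y a₂),
    (N.norm_mul x a₁).trans (mul_le_mul_of_nonneg_left ha₁ hx),
    (N.norm_mul x a₂).trans (mul_le_mul_of_nonneg_left ha₂ hx)⟩

end QuasiAlgebra

/-- `h(x*y, x*z) ≤ ‖x‖ · h(y,z)`. -/
theorem stmt_2 {X : Type*} [PartialOrder X] (Q : QuasiAlgebra X) (N : Q.Norm)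
    (x y z : X) :
    Q.hmet N (Q.mul x y) (Q.mul x z) ≤ N.norm x * Q.hmet N y z := by
  rw [Q.hmet_eq_sInf N, Q.hmet_eq_sInf N]
  exact Real.sInf_le_mul_sInf_of_smul_subset (N.norm_nonneg x) (Q.hausdorffRadii_nonempty N y z)
    (Q.hausdorffRadii_bddBelow N _ _) (Q.smul_hausdorffRadii_subset_mul_left N x y z)
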